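/- (Approximation error of the almost-finite-dependence value difference.) Let X be a finite nonempty set and D a finite set of actions with baseline 0, β ∈ ℝ, ρ ≥ 1, and let V, v, u, e, f, w_1, …, w_ρ, F(w_s), c(w_s), f̃, ũ, ṽ be as in the stationary exact identity: V(x) = v(d,x) + e(d,x), v(d,x) = u(d,x) + β Σ_{x'} f(x'|d,x) V(x'), Σ_d w_s(d,x) = 1. Define the almost-finite-dependence value difference ṽ_AFD(d, x) = ũ(d, x) + Σ_{τ=1}^{ρ} β^τ f̃(· | d, x)ᵀ ( F(w_1) ⋯ F(w_{τ−1}) ) c(w_τ). Then for all d ∈ D and x ∈ X, | ṽ_AFD(d, x) − ṽ(d, x) | ≤ |β|^{ρ+1} · ( Σ_{x'} | ( f̃(· | d, x)ᵀ F(w_1) ⋯ F(w_ρ) )(x') | ) · max_{x'' ∈ X} |V(x'')|; in particular, if the forward product f̃(· | d, x)ᵀ F(w_1) ⋯ F(w_ρ) has small L¹ norm, the AFD characterization approximates the true value difference up to that order. -/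
import Mathlib


open Matrix

/-- The `w`-weighted one-step transition matrix with `(x, x')` entry
`Σ_d w(d, x) f(x' | d, x)`. -/
noncomputable def statTransMatrix {X D : Type*} [Fintype X] [Fintype D]
    (f : D → X → X → ℝ) (w : D → X → ℝ) : Matrix X X ℝ :=
  Matrix.of fun x x' => ∑ d : D, w d x * f d x x'

/-- The partial products `F(w₁) ⋯ F(w_k)` of weighted transition matrices; the empty
product (`k = 0`) is the identity matrix. -/
noncomputable def prodTransMatrix {X D : Type*} [Fintype X] [DecidableEq X]
    [Fintype D] (f : D → X → X → ℝ) (ws : ℕ → D → X → ℝ) : ℕ → Matrix X X ℝ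
  | 0 => 1
  | (k + 1) => prodTransMatrix f ws k * statTransMatrix f (ws (k + 1))

/-- The `w`-weighted vector `c(w)` with entry `Σ_d w(d, x) (u(d, x) + e(d, x))`. -/
noncomputable def weightedPayoff {X D : Type*} [Fintype D]
    (u e : D → X → ℝ) (w : D → X → ℝ) : X → ℝ :=
  fun x => ∑ d : D, w d x * (u d x + e d x)

/-- Approximation error of the almost-finite-dependence value difference: the AFD
characterization `ṽ_AFD` differs from the true value difference `ṽ` by at most
`|β|^(ρ+1)` times the L¹ norm of the forward product `f̃(·|d,x)ᵀ F(w₁) ⋯ F(w_ρ)`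
times the sup norm of the integrated value function `V`. -/
theorem afd_value_difference_error_bound
    {X D : Type*} [Fintype X] [DecidableEq X] [Nonempty X] [Fintype D]
    (d₀ : D) (β : ℝ) (ρ : ℕ) (hρ : 1 ≤ ρ)
    (V : X → ℝ) (v : D → X → ℝ) (u : D → X → ℝ) (e : D → X → ℝ)
    (f : D → X → X → ℝ)
    (hAM : ∀ (d : D) (x : X), V x = v d x + e d x)
    (hBellman : ∀ (d : D) (x : X),
      v d x = u d x + β * ∑ x' : X, f d x x' * V x')
    (ws : ℕ → D → X → ℝ)
    (hw : ∀ s, 1 ≤ s → s ≤ ρ → ∀ x : X, ∑ d : D, ws s d x = 1)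
    (vAFD : D → X → ℝ)
    (hAFD : ∀ (d : D) (x : X),
      vAFD d x = (u d x - u d₀ x)
        + ∑ τ ∈ Finset.range ρ, β ^ (τ + 1) *
            ∑ x' : X,
              ((fun x₁ => f d x x₁ - f d₀ x x₁) ᵥ* prodTransMatrix f ws τ) x' *
                weightedPayoff u e (ws (τ + 1)) x') :
    ∀ (d : D) (x : X),
      |vAFD d x - (v d x - v d₀ x)| ≤
        |β| ^ (ρ + 1) *
          (∑ x' : X,
            |((fun x₁ => f d x x₁ - f d₀ x x₁) ᵥ* prodTransMatrix f ws ρ) x'|) *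
          (Finset.univ.sup' Finset.univ_nonempty fun x'' : X => |V x''|) := by
  intro d x
  set g : X → ℝ := fun x₁ => f d x x₁ - f d₀ x x₁ with hg
  -- Decompose V via the weights
  have hVdec : ∀ s, 1 ≤ s → s ≤ ρ → ∀ x' : X,
      V x' = weightedPayoff u e (ws s) x'
        + β * ∑ x'' : X, statTransMatrix f (ws s) x' x'' * V x'' := by
    intro s h1 h2 x'
    have hws := hw s h1 h2 x'
    have hterm : ∀ d' : D, ws s d' x' * V x'
        = ws s d' x' * (u d' x' + e d' x')
          + β * ∑ x'' : X, ws s d' x' * f d' x' x'' * V x'' := by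
      intro d'
      calc ws s d' x' * V x'
          = ws s d' x' * (u d' x' + e d' x')
            + β * (ws s d' x' * ∑ x'' : X, f d' x' x'' * V x'') := by
            nth_rewrite 1 [hAM d' x', hBellman d' x']; ring
        _ = ws s d' x' * (u d' x' + e d' x')
            + β * ∑ x'' : X, ws s d' x' * f d' x' x'' * V x'' := by
            rw [Finset.mul_sum]; ring_nf
    calc V x' = (∑ d' : D, ws s d' x') * V x' := by rw [hws, one_mul]
      _ = ∑ d' : D, ws s d' x' * V x' := by rw [Finset.sum_mul]
      _ = ∑ d' : D, (ws s d' x' * (u d' x' + e d' x')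
            + β * ∑ x'' : X, ws s d' x' * f d' x' x'' * V x'') := by
            exact Finset.sum_congr rfl fun d' _ => hterm d'
      _ = weightedPayoff u e (ws s) x'
          + β * ∑ x'' : X, statTransMatrix f (ws s) x' x'' * V x'' := by
          rw [Finset.sum_add_distrib]
          congr 1
          rw [← Finset.mul_sum, Finset.sum_comm]
          congr 1
          refine Finset.sum_congr rfl fun x'' _ => ?_
          simp only [statTransMatrix, Matrix.of_apply, Finset.sum_mul]
  -- key induction
  have key : ∀ k, k ≤ ρ → (∑ x' : X, g x' * V x')
      = (∑ τ ∈ Finset.range k, β ^ τ *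
            ∑ x' : X, (g ᵥ* prodTransMatrix f ws τ) x' * weightedPayoff u e (ws (τ + 1)) x')
        + β ^ k * ∑ x' : X, (g ᵥ* prodTransMatrix f ws k) x' * V x' := by
    intro k
    induction k with
    | zero =>
      intro _
      simp [prodTransMatrix, Matrix.vecMul_one]
    | succ k ih =>
      intro hk
      rw [ih (by omega), Finset.sum_range_succ]
      have hrec : β ^ k * ∑ x' : X, (g ᵥ* prodTransMatrix f ws k) x' * V x'
          = β ^ k * ∑ x' : X, (g ᵥ* prodTransMatrix f ws k) x' * weightedPayoff u e (ws (k + 1)) x'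
            + β ^ (k + 1) * ∑ x' : X, (g ᵥ* prodTransMatrix f ws (k + 1)) x' * V x' := by
        have h1 : ∀ x' : X, (g ᵥ* prodTransMatrix f ws k) x' * V x'
            = (g ᵥ* prodTransMatrix f ws k) x' * weightedPayoff u e (ws (k + 1)) x'
              + β * ∑ x'' : X, (g ᵥ* prodTransMatrix f ws k) x' * statTransMatrix f (ws (k + 1)) x' x'' * V x'' := by
          intro x'
          rw [hVdec (k + 1) (by omega) (by omega) x']
          simp only [mul_add, Finset.mul_sum]
          congr 1
          exact Finset.sum_congr rfl fun x'' _ => by ring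
        calc β ^ k * ∑ x' : X, (g ᵥ* prodTransMatrix f ws k) x' * V x'
            = β ^ k * ∑ x' : X, ((g ᵥ* prodTransMatrix f ws k) x' * weightedPayoff u e (ws (k + 1)) x'
              + β * ∑ x'' : X, (g ᵥ* prodTransMatrix f ws k) x' * statTransMatrix f (ws (k + 1)) x' x'' * V x'') := by
              rw [Finset.sum_congr rfl fun x' _ => h1 x']
          _ = β ^ k * ∑ x' : X, (g ᵥ* prodTransMatrix f ws k) x' * weightedPayoff u e (ws (k + 1)) x'
              + β ^ (k + 1) * ∑ x'' : X, (∑ x' : X, (g ᵥ* prodTransMatrix f ws k) x' * statTransMatrix f (ws (k + 1)) x' x'') * V x'' := by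
              rw [Finset.sum_add_distrib, mul_add]
              congr 1
              rw [← Finset.mul_sum, Finset.sum_comm]
              simp_rw [Finset.sum_mul]
              ring
          _ = β ^ k * ∑ x' : X, (g ᵥ* prodTransMatrix f ws k) x' * weightedPayoff u e (ws (k + 1)) x'
              + β ^ (k + 1) * ∑ x'' : X, (g ᵥ* prodTransMatrix f ws (k + 1)) x'' * V x'' := by
              congr 2
              refine Finset.sum_congr rfl fun x'' _ => ?_
              congr 1
              show ((g ᵥ* prodTransMatrix f ws k) ᵥ* statTransMatrix f (ws (k + 1))) x'' = _
              rw [Matrix.vecMul_vecMul]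
              rfl
      rw [hrec]; ring
  -- express the difference
  have hdiff : vAFD d x - (v d x - v d₀ x)
      = -(β ^ (ρ + 1) * ∑ x' : X, (g ᵥ* prodTransMatrix f ws ρ) x' * V x') := by
    have hv : v d x - v d₀ x = (u d x - u d₀ x) + β * ∑ x' : X, g x' * V x' := by
      rw [hBellman d x, hBellman d₀ x]
      have : ∑ x' : X, g x' * V x'
          = (∑ x' : X, f d x x' * V x') - ∑ x' : X, f d₀ x x' * V x' := by
        rw [← Finset.sum_sub_distrib]
        exact Finset.sum_congr rfl fun x' _ => by simp [hg]; ring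
      rw [this]; ring
    rw [hAFD d x, hv, key ρ le_rfl]
    rw [mul_add, Finset.mul_sum]
    have hsum : ∀ τ ∈ Finset.range ρ,
        β * (β ^ τ * ∑ x' : X, (g ᵥ* prodTransMatrix f ws τ) x' * weightedPayoff u e (ws (τ + 1)) x')
        = β ^ (τ + 1) * ∑ x' : X, (g ᵥ* prodTransMatrix f ws τ) x' * weightedPayoff u e (ws (τ + 1)) x' := by
      intro τ _; ring
    rw [Finset.sum_congr rfl hsum]
    ring
  rw [hdiff, abs_neg, abs_mul, abs_pow]
  rw [mul_assoc]
  refine mul_le_mul_of_nonneg_left ?_ (by positivity)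
  set M := Finset.univ.sup' Finset.univ_nonempty fun x'' : X => |V x''| with hM
  calc |∑ x' : X, (g ᵥ* prodTransMatrix f ws ρ) x' * V x'|
      ≤ ∑ x' : X, |(g ᵥ* prodTransMatrix f ws ρ) x' * V x'| := Finset.abs_sum_le_sum_abs _ _
    _ ≤ ∑ x' : X, |(g ᵥ* prodTransMatrix f ws ρ) x'| * M := by
        refine Finset.sum_le_sum fun x' _ => ?_
        rw [abs_mul]
        have hle : |V x'| ≤ M := Finset.le_sup' (fun x'' : X => |V x''|) (Finset.mem_univ x')
        exact mul_le_mul_of_nonneg_left hle (abs_nonneg _)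
    _ = (∑ x' : X, |(g ᵥ* prodTransMatrix f ws ρ) x'|) * M := by rw [Finset.sum_mul]
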